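/- With f and g defined as from the integration-by-parts expansion of the Radau polynomial, for all z near 0 and all ξ, f(z,ξ)/g(z) = e^{(z/2)(ξ+1)} − ((-1)^{p+1} z^{p+1} / (2 g(z))) [ R⁻_{p+1}(ξ) + ∑_{k=1}^∞ (z/2)^k R⁻⁽⁻ᵏ⁾_{p+1}(ξ) ]. -/

import Mathlib

open Polynomial intervalIntegral

/-- The `k`-th Legendre polynomial, defined via the Rodrigues formula. -/
noncomputable def leg (k : ℕ) : Polynomial ℝ :=
  C (1 / (2 ^ k * (k.factorial : ℝ))) * (fun q => derivative q)^[k] ((X ^ 2 - 1) ^ k)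

/-- The right Radau polynomial `R⁻_{p+1} = P_{p+1} - P_p`. -/
noncomputable def radau (p : ℕ) : Polynomial ℝ := leg (p + 1) - leg p

/-- Iterated antiderivatives of the right Radau polynomial, with base point `-1`. -/
noncomputable def radauIter (p : ℕ) : ℕ → ℝ → ℝ
  | 0 => fun ξ => (radau p).eval ξ
  | (k + 1) => fun ξ => ∫ s in (-1 : ℝ)..ξ, radauIter p k s

/-- The numerator `f(z, ξ)` from the integration-by-parts expansion, as a function. -/
noncomputable def DGfFun (p : ℕ) (z : ℂ) (ξ : ℝ) : ℂ :=
  ((-1 : ℂ) ^ (p + 1) / 2) *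
    ∑ k ∈ Finset.Icc 1 (p + 1),
      (2 : ℂ) ^ k * z ^ (p + 1 - k) *
        ((((fun q => derivative q)^[k] (radau p)).eval ξ : ℝ) : ℂ)

/-- The denominator `g(z)` from the integration-by-parts expansion, as a function. -/
noncomputable def DGgFun (p : ℕ) (z : ℂ) : ℂ :=
  z ^ (p + 1) + DGfFun p z (-1)


lemma eta_deriv : (fun q : Polynomial ℝ => derivative q) = (⇑(derivative (R := ℝ))) := rfl

lemma sq_sub_one_factor : (X ^ 2 - 1 : Polynomial ℝ) = (X - C 1) * (X + C 1) := by rw [C_1]; ring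

lemma natDegree_leg_le (n : ℕ) : (leg n).natDegree ≤ n := by
  unfold leg
  rw [eta_deriv]
  refine (natDegree_C_mul_le _ _).trans ?_
  refine (natDegree_iterate_derivative _ _).trans ?_
  have h : ((X ^ 2 - 1 : Polynomial ℝ) ^ n).natDegree ≤ 2 * n := by
    refine natDegree_pow_le.trans ?_
    have : (X ^ 2 - 1 : Polynomial ℝ).natDegree ≤ 2 := by
      refine (natDegree_sub_le _ _).trans ?_
      simp [natDegree_X_pow]
    nlinarith
  omega

lemma radau_natDegree_le (p : ℕ) : (radau p).natDegree ≤ p + 1 := by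
  unfold radau
  refine (natDegree_sub_le _ _).trans ?_
  exact max_le (natDegree_leg_le _) ((natDegree_leg_le _).trans (Nat.le_succ _))

lemma iterate_derivative_radau_top (p : ℕ) : derivative^[p + 2] (radau p) = 0 :=
  iterate_derivative_eq_zero ((radau_natDegree_le p).trans_lt (by omega))

lemma leg_eval_neg_one (n : ℕ) : (leg n).eval (-1) = (-1) ^ n := by
  unfold leg
  rw [eta_deriv, sq_sub_one_factor, mul_pow, iterate_derivative_mul]
  simp only [iterate_derivative_X_add_pow, iterate_derivative_X_sub_pow, nsmul_eq_mul]
  rw [eval_mul, eval_C, eval_finset_sum]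
  simp only [eval_mul, eval_natCast, eval_pow, eval_sub, eval_add, eval_X, eval_C]
  rw [Finset.sum_eq_single_of_mem n (Finset.mem_range.2 n.lt_succ_self) (fun k _ hkn => by
    rw [show (-1 : ℝ) + 1 = 0 by ring, zero_pow (show n - k ≠ 0 by
      have : k ≤ n := Nat.lt_succ_iff.1 (Finset.mem_range.1 ‹k ∈ Finset.range n.succ›); omega)]
    ring)]
  simp only [Nat.sub_self, Nat.sub_zero, Nat.choose_self, Nat.descFactorial_self,
    Nat.descFactorial_zero, pow_zero, Nat.cast_one, one_mul, mul_one]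
  rw [show (-1 : ℝ) - 1 = (-1) * 2 by ring, mul_pow]
  have hf : (n.factorial : ℝ) ≠ 0 := Nat.cast_ne_zero.2 n.factorial_ne_zero
  have h2n : (2 : ℝ) ^ n ≠ 0 := by positivity
  field_simp

lemma radau_eval_neg_one (p : ℕ) : (radau p).eval (-1) = 2 * (-1) ^ (p + 1) := by
  unfold radau
  rw [eval_sub, leg_eval_neg_one, leg_eval_neg_one, pow_succ]
  ring

lemma iterate_derivative_sq_sub_one (n : ℕ) :
    derivative^[2 * n] ((X ^ 2 - 1 : Polynomial ℝ) ^ n) = C (((2 * n).factorial : ℝ)) := by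
  rw [sq_sub_one_factor, mul_pow, iterate_derivative_mul]
  rw [Finset.sum_eq_single_of_mem n (Finset.mem_range.2 (by omega)) (fun k _ hkn => by
    rcases lt_or_ge k n with hk | hk
    · rw [iterate_derivative_X_sub_pow,
        Nat.descFactorial_eq_zero_iff_lt.2 (show n < 2 * n - k by omega), zero_smul, zero_mul,
        smul_zero]
    · rw [iterate_derivative_X_add_pow,
        Nat.descFactorial_eq_zero_iff_lt.2 (show n < k from lt_of_le_of_ne hk (Ne.symm hkn)),
        zero_smul, mul_zero, smul_zero])]
  rw [iterate_derivative_X_sub_pow, iterate_derivative_X_add_pow]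
  have h1 : 2 * n - n = n := by omega
  rw [h1, Nat.sub_self, pow_zero, pow_zero, Nat.descFactorial_self]
  have hc := Nat.choose_mul_factorial_mul_factorial (show n ≤ 2 * n by omega)
  rw [h1] at hc
  simp only [nsmul_eq_mul, mul_one]
  rw [← Nat.cast_mul, ← Nat.cast_mul, show (2 * n).choose n * (n.factorial * n.factorial)
    = (2 * n).factorial by rw [← mul_assoc]; exact hc, C_eq_natCast]

lemma iterate_derivative_radau_p1 (p : ℕ) :
    derivative^[p + 1] (radau p) =
      C (((2 * (p + 1)).factorial : ℝ) / (2 ^ (p + 1) * ((p + 1).factorial : ℝ))) := by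
  unfold radau
  rw [iterate_derivative_sub, iterate_derivative_eq_zero ((natDegree_leg_le p).trans_lt (by omega))]
  unfold leg
  rw [eta_deriv, iterate_derivative_C_mul, ← Function.iterate_add_apply,
    show (p + 1) + (p + 1) = 2 * (p + 1) by omega, iterate_derivative_sq_sub_one]
  rw [sub_zero, ← C_mul]
  congr 1
  field_simp


lemma radauIter_zero (p : ℕ) : radauIter p 0 = fun ξ => (radau p).eval ξ := rfl
lemma radauIter_succ (p k : ℕ) :
    radauIter p (k + 1) = fun ξ => ∫ s in (-1 : ℝ)..ξ, radauIter p k s := rfl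

lemma radauIter_cont (p : ℕ) : ∀ k, Continuous (radauIter p k) := by
  intro k
  induction k with
  | zero => rw [radauIter_zero]; exact Polynomial.continuous _
  | succ k ih =>
    rw [radauIter_succ]
    exact continuous_iff_continuousAt.2 fun ξ =>
      (intervalIntegral.integral_hasDerivAt_right (ih.intervalIntegrable _ _)
        (ih.stronglyMeasurableAtFilter _ _) ih.continuousAt).continuousAt

lemma radauIter_hasDerivAt (p k : ℕ) (ξ : ℝ) :
    HasDerivAt (radauIter p (k + 1)) (radauIter p k ξ) ξ := by
  rw [radauIter_succ]
  exact intervalIntegral.integral_hasDerivAt_right ((radauIter_cont p k).intervalIntegrable _ _)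
    ((radauIter_cont p k).stronglyMeasurableAtFilter _ _) (radauIter_cont p k).continuousAt

lemma radauIter_neg_one (p k : ℕ) : radauIter p (k + 1) (-1) = 0 := by
  rw [radauIter_succ]
  exact intervalIntegral.integral_same

lemma abs_integral_abs_pow (k : ℕ) (c : ℝ) :
    |∫ x in (0:ℝ)..c, |x| ^ k| = |c| ^ (k + 1) / (k + 1) := by
  rcases le_or_gt 0 c with hc | hc
  · have heq : Set.EqOn (fun x : ℝ => |x| ^ k) (fun x : ℝ => x ^ k) (Set.uIcc 0 c) := by
      intro x hx
      rw [Set.uIcc_of_le hc] at hx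
      simp only
      rw [abs_of_nonneg hx.1]
    rw [intervalIntegral.integral_congr heq, integral_pow, zero_pow (by omega), sub_zero,
      abs_of_nonneg hc, abs_of_nonneg (by positivity)]
  · have heq : Set.EqOn (fun x : ℝ => |x| ^ k) (fun x : ℝ => (-1) ^ k * x ^ k) (Set.uIcc 0 c) := by
      intro x hx
      rw [Set.uIcc_of_ge hc.le] at hx
      simp only
      rw [abs_of_nonpos hx.2, neg_eq_neg_one_mul, mul_pow]
    rw [intervalIntegral.integral_congr heq, intervalIntegral.integral_const_mul, integral_pow,
      zero_pow (by omega), sub_zero, abs_mul, abs_pow, abs_neg, abs_one, one_pow, one_mul,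
      abs_div, abs_pow, abs_of_nonneg (show (0:ℝ) ≤ (k:ℝ) + 1 by positivity)]

lemma radauIter_bound (p : ℕ) (R M : ℝ) (hR : 1 ≤ R)
    (hM : ∀ x ∈ Set.Icc (-R) R, |(radau p).eval x| ≤ M) :
    ∀ k, ∀ ξ ∈ Set.Icc (-R) R, |radauIter p k ξ| ≤ M * |ξ + 1| ^ k / (k.factorial) := by
  intro k
  induction k with
  | zero => intro ξ hξ; simpa [radauIter_zero] using hM ξ hξ
  | succ k ih =>
    intro ξ hξ
    have hMnn : 0 ≤ M := le_trans (abs_nonneg _) (hM 0 (by constructor <;> linarith [hR]))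
    obtain ⟨hξ1, hξ2⟩ := hξ
    have hRR : Set.uIcc (-R) R = Set.Icc (-R) R := Set.uIcc_of_le (by linarith)
    have hmem : Set.uIcc (-1 : ℝ) ξ ⊆ Set.Icc (-R) R := by
      rw [← hRR]
      exact Set.uIcc_subset_uIcc (by rw [hRR]; exact ⟨by linarith, by linarith⟩)
        (by rw [hRR]; exact ⟨hξ1, hξ2⟩)
    rw [radauIter_succ]
    have hint : IntervalIntegrable (fun t : ℝ => M * |t + 1| ^ k / (k.factorial : ℝ))
        MeasureTheory.volume (-1) ξ :=
      ((continuous_const.mul ((continuous_abs.comp (continuous_id.add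
        continuous_const)).pow k)).div_const _).intervalIntegrable _ _
    have hb : ∀ᵐ t ∂(MeasureTheory.volume.restrict (Set.uIoc (-1:ℝ) ξ)),
        ‖radauIter p k t‖ ≤ M * |t + 1| ^ k / (k.factorial : ℝ) := by
      refine (MeasureTheory.ae_restrict_mem measurableSet_uIoc).mono fun t ht => ?_
      rw [Real.norm_eq_abs]
      exact ih t (hmem (Set.uIoc_subset_uIcc ht))
    have key := intervalIntegral.norm_integral_le_abs_of_norm_le hb hint
    rw [Real.norm_eq_abs] at key
    refine key.trans ?_
    have e1 : (fun t : ℝ => M * |t + 1| ^ k / (k.factorial : ℝ))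
        = fun t : ℝ => (M / (k.factorial : ℝ)) * ((fun x : ℝ => |x| ^ k) (t + 1)) := by
      funext t; simp only; ring
    rw [e1, intervalIntegral.integral_const_mul,
      intervalIntegral.integral_comp_add_right (fun x : ℝ => |x| ^ k) 1]
    rw [abs_mul, neg_add_cancel, abs_integral_abs_pow,
      abs_of_nonneg (div_nonneg hMnn (by positivity))]
    apply le_of_eq
    rw [Nat.factorial_succ]
    push_cast
    rw [div_mul_div_comm, mul_comm (k.factorial : ℝ) ((k:ℝ) + 1)]


lemma DGf_eq (p : ℕ) (z : ℂ) (ξ : ℝ) :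
    DGfFun p z ξ = ((-1 : ℂ) ^ (p + 1) / 2) * ∑ j ∈ Finset.range (p + 1),
      (2 : ℂ) ^ (j + 1) * z ^ (p - j) * (((derivative^[j + 1] (radau p)).eval ξ : ℝ) : ℂ) := by
  unfold DGfFun
  rw [eta_deriv]
  congr 1
  rw [← Finset.Ico_add_one_right_eq_Icc, Finset.sum_Ico_eq_sum_range]
  refine Finset.sum_congr (by norm_num) fun j hj => ?_
  rw [show 1 + j = j + 1 by omega, show p + 1 - (j + 1) = p - j by omega]

lemma DGf_hasDerivAt (p : ℕ) (z : ℂ) (ξ : ℝ) :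
    HasDerivAt (DGfFun p z)
      (z / 2 * DGfFun p z ξ
        - ((-1 : ℂ) ^ (p + 1) / 2) * z ^ (p + 1) * (((derivative (radau p)).eval ξ : ℝ) : ℂ)) ξ := by
  have hterm : ∀ j ∈ Finset.range (p + 1), HasDerivAt
      (fun y : ℝ => (2 : ℂ) ^ (j + 1) * z ^ (p - j) * (((derivative^[j + 1] (radau p)).eval y : ℝ) : ℂ))
      ((2 : ℂ) ^ (j + 1) * z ^ (p - j) * (((derivative^[j + 1 + 1] (radau p)).eval ξ : ℝ) : ℂ)) ξ := by
    intro j _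
    have h := HasDerivAt.const_mul ((2 : ℂ) ^ (j + 1) * z ^ (p - j))
      ((Polynomial.hasDerivAt (derivative^[j + 1] (radau p)) ξ).ofReal_comp)
    rwa [← Function.iterate_succ_apply' derivative (j + 1)] at h
  have hsum := HasDerivAt.const_mul ((-1 : ℂ) ^ (p + 1) / 2) (HasDerivAt.sum hterm)
  have hfun : (fun y : ℝ => ((-1 : ℂ) ^ (p + 1) / 2) * ∑ j ∈ Finset.range (p + 1),
      (2 : ℂ) ^ (j + 1) * z ^ (p - j) * (((derivative^[j + 1] (radau p)).eval y : ℝ) : ℂ))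
      = DGfFun p z := by
    funext y; rw [DGf_eq]
  simp only [Finset.sum_apply] at hsum
  rw [hfun] at hsum
  convert hsum using 1
  · rfl
  have tele := Finset.sum_range_sub
    (fun j => (2 : ℂ) ^ j * z ^ (p + 1 - j) * (((derivative^[j + 1] (radau p)).eval ξ : ℝ) : ℂ))
    (p + 1)
  have e1 : ∑ j ∈ Finset.range (p + 1),
      ((2 : ℂ) ^ (j + 1) * z ^ (p - j) * (((derivative^[j + 1 + 1] (radau p)).eval ξ : ℝ) : ℂ)
        - z / 2 * ((2 : ℂ) ^ (j + 1) * z ^ (p - j) * (((derivative^[j + 1] (radau p)).eval ξ : ℝ) : ℂ)))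
      = (2 : ℂ) ^ (p + 1) * z ^ (p + 1 - (p + 1)) * (((derivative^[p + 1 + 1] (radau p)).eval ξ : ℝ) : ℂ)
        - (2 : ℂ) ^ 0 * z ^ (p + 1 - 0) * (((derivative^[0 + 1] (radau p)).eval ξ : ℝ) : ℂ) := by
    rw [← tele]
    refine Finset.sum_congr rfl fun j hj => ?_
    have hjp : j ≤ p := by have := Finset.mem_range.1 hj; omega
    rw [Nat.succ_sub_succ, show p + 1 - j = (p - j) + 1 by omega, pow_succ]
    ring
  rw [show p + 1 + 1 = p + 2 from rfl, iterate_derivative_radau_top] at e1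
  simp only [eval_zero, Complex.ofReal_zero, mul_zero, zero_sub, pow_zero, one_mul,
    Nat.sub_self, Nat.sub_zero, zero_add, Function.iterate_one] at e1
  rw [Finset.sum_sub_distrib, ← Finset.mul_sum] at e1
  rw [DGf_eq]
  linear_combination (-((-1 : ℂ) ^ (p + 1) / 2)) * e1


lemma key_identity (p : ℕ) (z : ℂ) (ξ : ℝ) :
    DGfFun p z ξ = DGgFun p z * Complex.exp (z / 2 * (ξ + 1)) -
      ((-1 : ℂ) ^ (p + 1) / 2) * z ^ (p + 1) *
        ((((radau p).eval ξ : ℝ) : ℂ) +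
          ∑' k : ℕ, (z / 2) ^ (k + 1) * (radauIter p (k + 1) ξ : ℂ)) := by
  set R : ℝ := |ξ| + 2 with hRdef
  have hR1 : (1 : ℝ) ≤ R := by have := abs_nonneg ξ; simp only [hRdef]; linarith
  obtain ⟨M, hM⟩ : ∃ M, ∀ x ∈ Set.Icc (-R) R, |(radau p).eval x| ≤ M := by
    obtain ⟨M, hM⟩ := isCompact_Icc.exists_bound_of_continuousOn
      ((radau p).continuous.continuousOn (s := Set.Icc (-R) R))
    exact ⟨M, fun x hx => by have := hM x hx; rwa [Real.norm_eq_abs] at this⟩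
  have hMnn : 0 ≤ M := le_trans (abs_nonneg _) (hM 0 ⟨by linarith, by linarith⟩)
  set t : Set ℝ := Set.Ioo (-R) R with htdef
  have hmemξ : ξ ∈ t := ⟨by simp only [hRdef]; cases abs_cases ξ <;> linarith,
    by simp only [hRdef]; cases abs_cases ξ <;> linarith⟩
  have hmem1 : (-1 : ℝ) ∈ t := ⟨by simp only [hRdef]; have := abs_nonneg ξ; linarith,
    by simp only [hRdef]; have := abs_nonneg ξ; linarith⟩
  have htIcc : t ⊆ Set.Icc (-R) R := Set.Ioo_subset_Icc_self
  -- the series functions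
  set g : ℕ → ℝ → ℂ := fun k y => (z / 2) ^ (k + 1) * ((radauIter p (k + 1) y : ℝ) : ℂ) with hgdef
  set g' : ℕ → ℝ → ℂ := fun k y => (z / 2) ^ (k + 1) * ((radauIter p k y : ℝ) : ℂ) with hg'def
  set u : ℕ → ℝ := fun k => ‖z / 2‖ ^ (k + 1) * (M * (R + 1) ^ k / k.factorial) with hudef
  have hu : Summable u := by
    have h1 := Real.summable_pow_div_factorial (‖z / 2‖ * (R + 1))
    refine (h1.mul_left (‖z / 2‖ * M)).congr fun k => ?_
    simp only [hudef, mul_pow, pow_succ]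
    field_simp
  have hbound : ∀ k, ∀ y ∈ t, ‖g' k y‖ ≤ u k := by
    intro k y hy
    have hy' := htIcc hy
    have h1 := radauIter_bound p R M hR1 hM k y hy'
    have hy1 : |y + 1| ≤ R + 1 := by
      have : |y| ≤ R := abs_le.2 ⟨hy'.1, hy'.2⟩
      calc |y + 1| ≤ |y| + |1| := abs_add_le y 1
        _ ≤ R + 1 := by rw [abs_one]; linarith
    have h2 : |radauIter p k y| ≤ M * (R + 1) ^ k / k.factorial := by
      refine h1.trans ?_
      gcongr
    simp only [hg'def, hudef, norm_mul, norm_pow, Complex.norm_real, Real.norm_eq_abs]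
    gcongr
  have hderiv : ∀ k, ∀ y ∈ t, HasDerivAt (g k) (g' k y) y := fun k y _ =>
    HasDerivAt.const_mul _ ((radauIter_hasDerivAt p k y).ofReal_comp)
  have hg0 : Summable fun k => g k (-1) := by
    refine summable_zero.congr fun k => ?_
    simp [hgdef, radauIter_neg_one]
  have hsummable : ∀ y ∈ t, Summable fun k => g' k y := by
    intro y hy
    refine Summable.of_norm ?_
    exact (hu.of_nonneg_of_le (fun k => norm_nonneg _) (fun k => hbound k y hy))
  -- derivative of the tsum
  have hT : ∀ y ∈ t, HasDerivAt (fun x => ∑' k, g k x) (∑' k, g' k y) y := fun y hy =>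
    hasDerivAt_tsum_of_isPreconnected hu isOpen_Ioo (convex_Ioo _ _).isPreconnected
      hderiv hbound hmem1 hg0 hy
  -- rewrite the derivative of the tsum
  have hS : ∀ y ∈ t, ∑' k, g' k y
      = z / 2 * (((radau p).eval y : ℝ) : ℂ) + z / 2 * ∑' k, g k y := by
    intro y hy
    rw [Summable.tsum_eq_zero_add (hsummable y hy)]
    congr 1
    · simp [hg'def, radauIter_zero, pow_one]
    · rw [← tsum_mul_left]
      refine tsum_congr fun k => ?_
      simp only [hg'def, hgdef]
      rw [pow_succ (z / 2) (k + 1)]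
      ring
  -- derivative of the exponential
  have hexp : ∀ y : ℝ, HasDerivAt (fun x : ℝ => Complex.exp (z / 2 * ((x : ℂ) + 1)))
      (z / 2 * Complex.exp (z / 2 * ((y : ℂ) + 1))) y := by
    intro y
    have h1 : HasDerivAt (fun x : ℝ => ((x : ℝ) : ℂ)) (((1 : ℝ) : ℂ)) y :=
      (hasDerivAt_id y).ofReal_comp
    have h2 := (HasDerivAt.const_mul (z / 2) (h1.add_const 1)).cexp
    convert h2 using 1
    push_cast
    ring
  set W : ℝ → ℂ := fun y => DGgFun p z * Complex.exp (z / 2 * ((y : ℂ) + 1))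
      - ((-1 : ℂ) ^ (p + 1) / 2) * z ^ (p + 1) *
        ((((radau p).eval y : ℝ) : ℂ) + ∑' k, g k y) with hWdef
  have hWd : ∀ y ∈ t, HasDerivAt W
      (z / 2 * W y - ((-1 : ℂ) ^ (p + 1) / 2) * z ^ (p + 1) *
        (((derivative (radau p)).eval y : ℝ) : ℂ)) y := by
    intro y hy
    have hRad : HasDerivAt (fun x : ℝ => (((radau p).eval x : ℝ) : ℂ))
        ((((derivative (radau p)).eval y : ℝ) : ℂ)) y := (Polynomial.hasDerivAt _ _).ofReal_comp
    have h1 := HasDerivAt.const_mul (DGgFun p z) (hexp y)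
    have h2 := HasDerivAt.const_mul (((-1 : ℂ) ^ (p + 1) / 2) * z ^ (p + 1))
      (hRad.add (hT y hy))
    have h3 := h1.sub h2
    convert h3 using 1
    · rfl
    · rfl
    rw [hS y hy]
    simp only [hWdef]
    ring
  set Φ : ℝ → ℂ := fun y => (DGfFun p z y - W y) * Complex.exp (-(z / 2) * (y : ℂ)) with hPdef
  have hPd : ∀ y ∈ t, HasDerivAt Φ 0 y := by
    intro y hy
    have hH := (DGf_hasDerivAt p z y).sub (hWd y hy)
    have hexp2 : HasDerivAt (fun x : ℝ => Complex.exp (-(z / 2) * (x : ℂ)))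
        (Complex.exp (-(z / 2) * (y : ℂ)) * (-(z / 2) * ((1 : ℝ) : ℂ))) y := by
      have h1 : HasDerivAt (fun x : ℝ => ((x : ℝ) : ℂ)) (((1 : ℝ) : ℂ)) y :=
        (hasDerivAt_id y).ofReal_comp
      exact (HasDerivAt.const_mul (-(z / 2)) h1).cexp
    have h3 := hH.mul hexp2
    convert h3 using 1
    · rfl
    · rfl
    simp only [Pi.sub_apply]
    push_cast
    ring
  -- constancy on [min (-1) ξ, max (-1) ξ]
  set a : ℝ := min (-1) ξ with hadef
  set b : ℝ := max (-1) ξ with hbdef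
  have hab : Set.Icc a b ⊆ t := by
    intro x hx
    exact ⟨lt_of_lt_of_le (lt_min hmem1.1 hmemξ.1) hx.1,
      lt_of_le_of_lt hx.2 (max_lt hmem1.2 hmemξ.2)⟩
  have hcont : ContinuousOn Φ (Set.Icc a b) := fun x hx =>
    ((hPd x (hab hx)).continuousAt).continuousWithinAt
  have hconst := constant_of_has_deriv_right_zero hcont (fun x hx =>
    (hPd x (hab (Set.Ico_subset_Icc_self hx))).hasDerivWithinAt)
  have hP_xi : Φ ξ = Φ a := hconst ξ ⟨min_le_right _ _, le_max_right _ _⟩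
  have hP_1 : Φ (-1) = Φ a := hconst (-1) ⟨min_le_left _ _, le_max_left _ _⟩
  have hW1 : W (-1) = DGgFun p z - z ^ (p + 1) := by
    simp only [hWdef]
    have hTs : (∑' k, g k (-1)) = 0 := by
      have hz : ∀ k : ℕ, g k (-1) = 0 := fun k => by
        simp [hgdef, radauIter_neg_one]
      rw [tsum_congr hz, tsum_zero]
    rw [hTs]
    have hexp0 : Complex.exp (z / 2 * (((-1 : ℝ) : ℂ) + 1)) = 1 := by
      rw [show (((-1 : ℝ) : ℂ) + 1) = 0 by push_cast; ring, mul_zero, Complex.exp_zero]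
    rw [hexp0, radau_eval_neg_one]
    push_cast
    have hsq : ((-1 : ℂ)) ^ (p + 1) * ((-1 : ℂ)) ^ (p + 1) = 1 := by
      rw [← mul_pow]; norm_num
    linear_combination (-(z ^ (p + 1))) * hsq
  have hF1 : DGfFun p z (-1) = DGgFun p z - z ^ (p + 1) := by
    unfold DGgFun; ring
  have hP10 : Φ (-1) = 0 := by
    simp only [hPdef]
    rw [hF1, hW1, sub_self, zero_mul]
  have hPxi0 : Φ ξ = 0 := by rw [hP_xi, ← hP_1, hP10]
  have hexpne : Complex.exp (-(z / 2) * (ξ : ℂ)) ≠ 0 := Complex.exp_ne_zero _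
  have hHxi : DGfFun p z ξ - W ξ = 0 := by
    have h := hPxi0
    simp only [hPdef] at h
    exact (mul_eq_zero.1 h).resolve_right hexpne
  rw [sub_eq_zero.1 hHxi]


lemma DGg_continuous (p : ℕ) : Continuous (DGgFun p) := by
  unfold DGgFun DGfFun
  exact (continuous_pow _).add (continuous_const.mul (continuous_finset_sum _ fun k _ =>
    (continuous_const.mul (continuous_pow _)).mul continuous_const))

lemma DGg_zero_ne (p : ℕ) : DGgFun p 0 ≠ 0 := by
  have hval : DGgFun p 0 = ((-1 : ℂ) ^ (p + 1) / 2) * ((2 : ℂ) ^ (p + 1) *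
      ((((2 * (p + 1)).factorial : ℝ) / (2 ^ (p + 1) * ((p + 1).factorial : ℝ)) : ℝ) : ℂ)) := by
    unfold DGgFun DGfFun
    rw [eta_deriv, zero_pow (by omega), zero_add]
    congr 1
    rw [Finset.sum_eq_single_of_mem (p + 1) (Finset.mem_Icc.2 ⟨by omega, le_refl _⟩)
      (fun k hk hkn => by
        have hk' : k ≤ p + 1 := (Finset.mem_Icc.1 hk).2
        rw [zero_pow (show p + 1 - k ≠ 0 by omega)]
        ring)]
    rw [Nat.sub_self, pow_zero, mul_one, iterate_derivative_radau_p1, eval_C]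
  rw [hval]
  refine mul_ne_zero (div_ne_zero (pow_ne_zero _ (by norm_num)) two_ne_zero) ?_
  refine mul_ne_zero (pow_ne_zero _ (by norm_num)) ?_
  rw [Complex.ofReal_ne_zero]
  positivity

theorem DG_f_div_g_expansion (p : ℕ) :
    ∀ᶠ z : ℂ in nhds 0, ∀ ξ : ℝ,
      DGfFun p z ξ / DGgFun p z =
        Complex.exp (z / 2 * (ξ + 1)) -
          ((-1 : ℂ) ^ (p + 1) * z ^ (p + 1) / (2 * DGgFun p z)) *
            ((((radau p).eval ξ : ℝ) : ℂ) +
              ∑' k : ℕ, (z / 2) ^ (k + 1) * (radauIter p (k + 1) ξ : ℂ)) := by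
  filter_upwards [(DGg_continuous p).continuousAt.eventually_ne (DGg_zero_ne p)] with z hz ξ
  rw [key_identity p z ξ]
  field_simp
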